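/- arXiv:1402.1273 — 5 statements merged into one kernel-verified Lean document; each statement's English description precedes it below -/
import Mathlib

section
/- Let A be a ℤ-graded left-artinian ring, M a nonzero ℤ-graded A-module that is simple as an ungraded A-module. Then M is not isomorphic as a graded module to any nontrivial shift M(i) with i ≠ 0. -/
/-- A family of additive subgroups `ℳ` of a module `M` over a `ℤ`-graded ring with
grading `𝒜` is a graded module structure if `𝒜 i • ℳ j ⊆ ℳ (i + j)`. -/
def IsGradedSMul {A M : Type*} [Ring A] [AddCommGroup M] [Module A M]
    (𝒜 : ℤ → AddSubgroup A) (ℳ : ℤ → AddSubgroup M) : Prop :=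
  ∀ ⦃i j : ℤ⦄ ⦃a : A⦄ ⦃m : M⦄, a ∈ 𝒜 i → m ∈ ℳ j → a • m ∈ ℳ (i + j)

/-!
Shifting the grading by `i ≠ 0` moves every nonzero homogeneous element out of its degree, so
`e - 1` is a nonzero endomorphism of the simple module `M` and hence surjective by Schur's lemma.
But a nonzero homogeneous `x` of degree `j` is never of the form `e y - y`: comparing components,
`y` would satisfy `y_{n+i} = e y_n` away from degree `j`, and then either `y_j ≠ 0` propagates
forward along `j + ℕ i`, or `y_{j-i} ≠ 0` propagates backward along `j - i - ℕ i`, contradicting the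
finiteness of the support of `y`; so `y_j = y_{j-i} = 0` and `x = e y_{j-i} - y_j = 0`.
-/

theorem Set.Finite.notMem_of_forall_add_mul_mem {s : Set ℤ} (hs : s.Finite) {i : ℤ} (hi : i ≠ 0)
    {n : ℤ} (hstep : ∀ k : ℕ, n + k * i ∈ s → n + (k + 1) * i ∈ s) : n ∉ s := by
  intro hn
  have hmem : ∀ k : ℕ, n + k * i ∈ s := by
    intro k
    induction k with
    | zero => simpa using hn
    | succ k ih => exact_mod_cast hstep k ih
  refine Set.infinite_of_injective_forall_mem (fun a b hab => ?_) hmem hs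
  exact_mod_cast mul_right_cancel₀ hi (add_left_cancel hab)

namespace DirectSum

variable {M : Type*} [AddCommGroup M] (ℳ : ℤ → AddSubgroup M) [Decomposition ℳ]

theorem exists_mem_ne_zero [Nontrivial M] : ∃ j, ∃ x ∈ ℳ j, x ≠ 0 := by
  obtain ⟨m, hm⟩ := exists_ne (0 : M)
  by_contra! h
  apply hm
  rw [← (decompose ℳ).symm_apply_apply m, (decompose ℳ).symm_apply_eq, decompose_zero]
  ext j
  exact h j _ (decompose ℳ m j).2

variable {ℳ} {f : M →+ M} {i : ℤ}

theorem decompose_map_of_shift (hf : ∀ n, ∀ x ∈ ℳ n, f x ∈ ℳ (i + n)) (y : M) (n : ℤ) :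
    (decompose ℳ (f y) (i + n) : M) = f (decompose ℳ y n) := by
  induction y using Decomposition.inductionOn ℳ with
  | zero => simp
  | homogeneous y =>
    rename_i m
    by_cases hmn : m = n
    · subst hmn
      rw [decompose_of_mem_same ℳ y.2, decompose_of_mem_same ℳ (hf m y y.2)]
    · rw [decompose_of_mem_ne ℳ y.2 hmn, decompose_of_mem_ne ℳ (hf m y y.2) (by omega), map_zero]
  | add y z hy hz =>
    simp only [map_add, decompose_add, add_apply, AddSubgroup.coe_add, hy, hz]

theorem eq_zero_of_mem_of_eq_map_sub_self (hf : Function.Injective f) (hi : i ≠ 0)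
    (hfℳ : ∀ n, ∀ x ∈ ℳ n, f x ∈ ℳ (i + n)) {j : ℤ} {x : M} (hx : x ∈ ℳ j) {y : M}
    (hxy : x = f y - y) : x = 0 := by
  set c : ℤ → M := fun n => decompose ℳ y n
  have hcomp : ∀ n, (decompose ℳ x (i + n) : M) = f (c n) - c (i + n) := fun n => by
    rw [hxy, decompose_sub, sub_apply, AddSubgroup.coe_sub, decompose_map_of_shift hfℳ]
  have hrec : ∀ n, i + n ≠ j → c (i + n) = f (c n) := fun n hn => by
    rw [eq_comm, ← sub_eq_zero, ← hcomp, decompose_of_mem_ne ℳ hx (Ne.symm hn)]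
  have hsupp : {n | c n ≠ 0}.Finite := by
    classical
    refine (decompose ℳ y).support.finite_toSet.subset fun n hn => ?_
    simpa [c] using hn
  have hforward : c j = 0 := by
    refine not_not.mp (hsupp.notMem_of_forall_add_mul_mem hi fun k hk => ?_)
    have := hrec (j + k * i) (by intro h; apply hi; nlinarith)
    rwa [Set.mem_ofPred_eq, show j + (k + 1) * i = i + (j + k * i) by ring, this,
      map_ne_zero_iff _ hf]
  have hbackward : c (j - i) = 0 := by
    refine not_not.mp (hsupp.notMem_of_forall_add_mul_mem (neg_ne_zero.mpr hi) fun k hk hk' => ?_)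
    have := hrec (j - i + (k + 1) * -i) (by intro h; apply hi; nlinarith)
    rw [Set.mem_ofPred_eq, show j - i + k * -i = i + (j - i + (k + 1) * -i) by ring, this, hk',
      map_zero] at hk
    exact hk rfl
  have := hcomp (j - i)
  rwa [add_sub_cancel, decompose_of_mem_same ℳ hx, hforward, hbackward, map_zero, sub_zero] at this

end DirectSum

theorem no_graded_iso_to_shift_general
    {A : Type*} [Ring A]
    {M : Type*} [AddCommGroup M] [Module A M]
    (ℳ : ℤ → AddSubgroup M) [DirectSum.Decomposition ℳ]
    (hsimple : IsSimpleModule A M)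
    (i : ℤ) (hi : i ≠ 0) :
    ¬ ∃ e : M ≃ₗ[A] M, ∀ j : ℤ, ∀ x ∈ ℳ j, e x ∈ ℳ (i + j) := by
  rintro ⟨e, he⟩
  have := IsSimpleModule.nontrivial A M
  obtain ⟨j, x, hx, hx0⟩ := DirectSum.exists_mem_ne_zero ℳ
  have hne : e.toLinearMap - LinearMap.id ≠ 0 := fun h => by
    have hex : e x = x := sub_eq_zero.mp (LinearMap.congr_fun h x)
    have := DirectSum.degree_eq_of_mem_mem ℳ (hex ▸ he j x hx) hx hx0
    omega
  obtain ⟨y, hy⟩ := LinearMap.surjective_of_ne_zero hne x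
  exact hx0 (DirectSum.eq_zero_of_mem_of_eq_map_sub_self (f := e.toAddMonoidHom) e.injective hi he
    hx hy.symm)

/-- **A graded simple module is not isomorphic to its nontrivial shifts.**
Let `A` be a `ℤ`-graded left-artinian ring and `M` a nonzero `ℤ`-graded
`A`-module which is simple as an ungraded module.  Then for `i ≠ 0` there is no
isomorphism of graded modules `M ≃ M(i)`, i.e. no `A`-linear bijection carrying
`ℳ j` into `ℳ (i + j)` for all `j`. -/
theorem no_graded_iso_to_shift
    {A : Type*} [Ring A] [IsArtinian A A]
    (𝒜 : ℤ → AddSubgroup A) [GradedRing 𝒜]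
    {M : Type*} [AddCommGroup M] [Module A M]
    (ℳ : ℤ → AddSubgroup M) [DirectSum.Decomposition ℳ]
    (hgr : IsGradedSMul 𝒜 ℳ)
    [Nontrivial M] (hsimple : IsSimpleModule A M)
    (i : ℤ) (hi : i ≠ 0) :
    ¬ ∃ e : M ≃ₗ[A] M, ∀ j : ℤ, ∀ x ∈ ℳ j, e x ∈ ℳ (i + j) :=
  no_graded_iso_to_shift_general ℳ hsimple i hi
end

section
/- Let A be a ℤ-graded left-artinian ring, and let M, N be ℤ-graded left A-modules of finite length with N simple as a graded module. If φ : M → N is a (not necessarily graded) surjective A-module homomorphism between the underlying ungraded modules, then some homogeneous component φ_i : M → N(i) of φ is a surjective morphism of graded modules. -/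
/-- A submodule is graded when it is stable under taking homogeneous components. -/
def Submodule.IsGraded {A N : Type*} [Ring A] [AddCommGroup N] [Module A N]
    (𝒩 : ℤ → AddSubgroup N) [DirectSum.Decomposition 𝒩] (p : Submodule A N) : Prop :=
  ∀ (j : ℤ), ∀ x ∈ p, (DirectSum.decompose 𝒩 x j : N) ∈ p

/-- A graded module is graded-simple if it is nonzero and its only graded
submodules are `⊥` and `⊤`. -/
def IsGradedSimpleModule (A : Type*) {N : Type*} [Ring A] [AddCommGroup N] [Module A N]
    (𝒩 : ℤ → AddSubgroup N) [DirectSum.Decomposition 𝒩] : Prop :=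
  Nontrivial N ∧ ∀ p : Submodule A N, p.IsGraded 𝒩 → p = ⊥ ∨ p = ⊤

/-!
The `i`-th homogeneous component `φᵢ` of `φ` sends `m ∈ M_j` to the degree-`(j + i)` part of
`φ m`; it is `A`-linear and of degree `i`, and `φ m` is recovered from the values `φᵢ m`.
So `φ ≠ 0` forces some `φᵢ ≠ 0`. The range of a degree-`i` map is a graded submodule,
and a nonzero graded submodule of a graded-simple module is everything.
-/

open DirectSum

section HomogeneousComponent

variable {A M N : Type*} [Ring A] [AddCommGroup M] [Module A M] [AddCommGroup N] [Module A N]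

lemma IsGradedSMul.decompose_smul_of_mem {𝒜 : ℤ → AddSubgroup A} {𝒩 : ℤ → AddSubgroup N}
    [Decomposition 𝒩] (hN : IsGradedSMul 𝒜 𝒩) {k : ℤ} {a : A} (ha : a ∈ 𝒜 k) (n : N) (l : ℤ) :
    (decompose 𝒩 (a • n) (k + l) : N) = a • (decompose 𝒩 n l : N) := by
  induction n using Decomposition.inductionOn 𝒩 with
  | zero => simp
  | @homogeneous j n =>
    obtain ⟨n, hn⟩ := n
    by_cases h : l = j
    · subst h
      rw [decompose_of_mem_same 𝒩 hn, decompose_of_mem_same 𝒩 (hN ha hn)]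
    · rw [decompose_of_mem_ne 𝒩 hn (Ne.symm h),
        decompose_of_mem_ne 𝒩 (hN ha hn) (by omega), smul_zero]
  | add x y hx hy =>
    simp only [smul_add, decompose_add, DirectSum.add_apply, AddSubgroup.coe_add, hx, hy]

lemma Submodule.IsGraded.eq_top {𝒩 : ℤ → AddSubgroup N} [Decomposition 𝒩]
    (hN : IsGradedSimpleModule A 𝒩) {p : Submodule A N} (hp : p.IsGraded 𝒩) (hp0 : p ≠ ⊥) :
    p = ⊤ :=
  (hN.2 p hp).resolve_left hp0

variable (ℳ : ℤ → AddSubgroup M) [Decomposition ℳ] (𝒩 : ℤ → AddSubgroup N) [Decomposition 𝒩]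

noncomputable def homogeneousComponentAddHom (φ : M →ₗ[A] N) (i : ℤ) : M →+ N :=
  (toAddMonoid fun j : ℤ =>
      { toFun := fun x : ℳ j => (decompose 𝒩 (φ x) (j + i) : N)
        map_zero' := by simp
        map_add' := by simp }).comp
    (decomposeAddEquiv ℳ).toAddMonoidHom

variable {ℳ 𝒩}

lemma homogeneousComponentAddHom_apply_of_mem (φ : M →ₗ[A] N) (i : ℤ) {j : ℤ} {m : M}
    (hm : m ∈ ℳ j) :
    homogeneousComponentAddHom ℳ 𝒩 φ i m = (decompose 𝒩 (φ m) (j + i) : N) := by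
  simp [homogeneousComponentAddHom, decompose_of_mem ℳ hm]

variable {𝒜 : ℤ → AddSubgroup A} [GradedRing 𝒜]

lemma homogeneousComponentAddHom_smul (hM : IsGradedSMul 𝒜 ℳ) (hN : IsGradedSMul 𝒜 𝒩)
    (φ : M →ₗ[A] N) (i : ℤ) (a : A) (m : M) :
    homogeneousComponentAddHom ℳ 𝒩 φ i (a • m) = a • homogeneousComponentAddHom ℳ 𝒩 φ i m := by
  induction m using Decomposition.inductionOn ℳ with
  | zero => simp
  | @homogeneous j m =>
    obtain ⟨m, hm⟩ := m
    induction a using Decomposition.inductionOn 𝒜 with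
    | zero => simp
    | @homogeneous k a =>
      obtain ⟨a, ha⟩ := a
      rw [homogeneousComponentAddHom_apply_of_mem φ i hm,
        homogeneousComponentAddHom_apply_of_mem φ i (hM ha hm), map_smul, add_assoc,
        hN.decompose_smul_of_mem ha]
    | add a b ha hb => rw [add_smul, map_add, ha, hb, add_smul]
  | add x y hx hy => rw [smul_add, map_add, hx, hy, map_add, smul_add]

variable (ℳ 𝒩)

noncomputable def homogeneousComponent (hM : IsGradedSMul 𝒜 ℳ) (hN : IsGradedSMul 𝒜 𝒩)
    (φ : M →ₗ[A] N) (i : ℤ) : M →ₗ[A] N :=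
  { homogeneousComponentAddHom ℳ 𝒩 φ i with
    map_smul' := homogeneousComponentAddHom_smul hM hN φ i }

variable {ℳ 𝒩} (hM : IsGradedSMul 𝒜 ℳ) (hN : IsGradedSMul 𝒜 𝒩) (φ : M →ₗ[A] N) (i : ℤ)

lemma homogeneousComponent_apply_of_mem {j : ℤ} {m : M} (hm : m ∈ ℳ j) :
    homogeneousComponent ℳ 𝒩 hM hN φ i m = (decompose 𝒩 (φ m) (j + i) : N) :=
  homogeneousComponentAddHom_apply_of_mem φ i hm

lemma homogeneousComponent_mem {j : ℤ} {m : M} (hm : m ∈ ℳ j) :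
    homogeneousComponent ℳ 𝒩 hM hN φ i m ∈ 𝒩 (j + i) := by
  rw [homogeneousComponent_apply_of_mem hM hN φ i hm]
  exact SetLike.coe_mem _

lemma decompose_homogeneousComponent (m : M) (d : ℤ) :
    (decompose 𝒩 (homogeneousComponent ℳ 𝒩 hM hN φ i m) d : N) =
      homogeneousComponent ℳ 𝒩 hM hN φ i (decompose ℳ m (d - i)) := by
  induction m using Decomposition.inductionOn ℳ with
  | zero => simp
  | @homogeneous j m =>
    obtain ⟨m, hm⟩ := m
    have hψm := homogeneousComponent_mem hM hN φ i hm
    by_cases h : d = j + i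
    · subst h
      rw [decompose_of_mem_same 𝒩 hψm, add_sub_cancel_right, decompose_of_mem_same ℳ hm]
    · rw [decompose_of_mem_ne 𝒩 hψm (by omega), decompose_of_mem_ne ℳ hm (by omega), map_zero]
  | add x y hx hy =>
    simp only [map_add, decompose_add, DirectSum.add_apply, AddSubgroup.coe_add, hx, hy]

lemma range_homogeneousComponent_isGraded :
    (LinearMap.range (homogeneousComponent ℳ 𝒩 hM hN φ i)).IsGraded 𝒩 := by
  rintro d _ ⟨m, rfl⟩
  exact ⟨_, (decompose_homogeneousComponent hM hN φ i m d).symm⟩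

lemma exists_homogeneousComponent_ne_zero (hφ : φ ≠ 0) :
    ∃ i, homogeneousComponent ℳ 𝒩 hM hN φ i ≠ 0 := by
  by_contra! h
  refine hφ (LinearMap.ext fun m => ?_)
  induction m using Decomposition.inductionOn ℳ with
  | zero => simp
  | @homogeneous j m =>
    obtain ⟨m, hm⟩ := m
    refine (decompose 𝒩).injective (DirectSum.ext fun d => Subtype.ext ?_)
    have hcomp := homogeneousComponent_apply_of_mem hM hN φ (d - j) hm
    rw [h, add_sub_cancel] at hcomp
    simpa using hcomp.symm
  | add x y hx hy => simp [hx, hy]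

end HomogeneousComponent

theorem exists_surjective_homogeneous_component_general
    {A : Type*} [Ring A]
    (𝒜 : ℤ → AddSubgroup A) [GradedRing 𝒜]
    {M N : Type*} [AddCommGroup M] [Module A M] [AddCommGroup N] [Module A N]
    (ℳ : ℤ → AddSubgroup M) [DirectSum.Decomposition ℳ] (hM : IsGradedSMul 𝒜 ℳ)
    (𝒩 : ℤ → AddSubgroup N) [DirectSum.Decomposition 𝒩] (hN : IsGradedSMul 𝒜 𝒩)
    (hNsimple : IsGradedSimpleModule A 𝒩)
    (φ : M →ₗ[A] N) (hφ : Function.Surjective φ) :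
    ∃ (i : ℤ) (ψ : M →ₗ[A] N),
      (∀ j : ℤ, ∀ x ∈ ℳ j, ψ x ∈ 𝒩 (j + i)) ∧
      Function.Surjective ψ ∧
      (∀ j : ℤ, ∀ x ∈ ℳ j, ψ x = (DirectSum.decompose 𝒩 (φ x) (j + i) : N)) := by
  have : Nontrivial N := hNsimple.1
  obtain ⟨i, hi⟩ := exists_homogeneousComponent_ne_zero hM hN φ (LinearMap.ne_zero_of_surjective hφ)
  have hrange := (range_homogeneousComponent_isGraded hM hN φ i).eq_top hNsimple
    (by rwa [ne_eq, LinearMap.range_eq_bot])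
  exact ⟨i, homogeneousComponent ℳ 𝒩 hM hN φ i, fun _ _ => homogeneousComponent_mem hM hN φ i,
    LinearMap.range_eq_top.mp hrange, fun _ _ => homogeneousComponent_apply_of_mem hM hN φ i⟩

/-- **A surjection onto a graded simple module has a surjective homogeneous
component.**  Let `A` be a `ℤ`-graded left-artinian ring, `M`, `N` graded
`A`-modules of finite length with `N` graded-simple.  If `φ : M → N` is a
surjective `A`-linear map (not necessarily graded), then some homogeneous
component `φᵢ : M → N(i)` of `φ` is a surjective morphism of graded modules. -/
theorem exists_surjective_homogeneous_component
    {A : Type*} [Ring A] [IsArtinian A A]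
    (𝒜 : ℤ → AddSubgroup A) [GradedRing 𝒜]
    {M N : Type*} [AddCommGroup M] [Module A M] [AddCommGroup N] [Module A N]
    (ℳ : ℤ → AddSubgroup M) [DirectSum.Decomposition ℳ] (hM : IsGradedSMul 𝒜 ℳ)
    (𝒩 : ℤ → AddSubgroup N) [DirectSum.Decomposition 𝒩] (hN : IsGradedSMul 𝒜 𝒩)
    (hMfl : IsFiniteLength A M) (hNfl : IsFiniteLength A N)
    (hNsimple : IsGradedSimpleModule A 𝒩)
    (φ : M →ₗ[A] N) (hφ : Function.Surjective φ) :
    ∃ (i : ℤ) (ψ : M →ₗ[A] N),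
      (∀ j : ℤ, ∀ x ∈ ℳ j, ψ x ∈ 𝒩 (j + i)) ∧
      Function.Surjective ψ ∧
      (∀ j : ℤ, ∀ x ∈ ℳ j, ψ x = (DirectSum.decompose 𝒩 (φ x) (j + i) : N)) :=
  exists_surjective_homogeneous_component_general 𝒜 ℳ hM 𝒩 hN hNsimple φ hφ
end

section
/- Let A be a ℤ-graded left-artinian ring and M an indecomposable finite-length A-module. If M admits two ℤ-gradings compatible with the A-module structure, then the two graded modules are isomorphic up to a shift of the grading. -/
/-! By Fitting's lemma an endomorphism `f` of an indecomposable module of finite length is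
an automorphism or nilpotent, according to which summand of the decomposition
`M = ker fⁿ ⊕ range fⁿ` vanishes, so `End_A M` is a local ring.

Relative to the gradings `ℳ` and `𝒩`, the identity of `M` is the finite sum of its homogeneous
components `φ_d`, which send `ℳ j` into `𝒩 (j + d)`; they are `A`-linear since `A` is spanned
by homogeneous elements, and finitely many suffice since `M` is finitely generated. As `1 = ∑ φ_d` in the local ring `End_A M`, some `φ_d` is a unit: an
isomorphism of graded modules up to the shift `d`. -/

open DirectSum

theorem Module.End.isLocalRing_of_indecomposable {R M : Type*} [Ring R] [AddCommGroup M]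
    [Module R M] [IsNoetherian R M] [IsArtinian R M] [Nontrivial M]
    (hind : ∀ p q : Submodule R M, IsCompl p q → p = ⊥ ∨ q = ⊥) :
    IsLocalRing (Module.End R M) := by
  refine IsLocalRing.of_isUnit_or_isUnit_one_sub_self fun f => ?_
  obtain ⟨n, hn⟩ := Filter.eventually_atTop.mp f.eventually_isCompl_ker_pow_range_pow
  have hfit := hn (n + 1) n.le_succ
  rcases hind _ _ hfit with hker | hrange
  · left
    rw [← isUnit_pow_iff n.succ_ne_zero, Module.End.isUnit_iff]
    exact ⟨LinearMap.ker_eq_bot.mp hker,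
      LinearMap.range_eq_top.mp (by simpa [hker] using hfit.sup_eq_top)⟩
  · exact .inr (IsNilpotent.isUnit_one_sub ⟨n + 1, LinearMap.range_eq_bot.mp hrange⟩)

section ShiftComponent

variable {A M : Type*} [Ring A] [AddCommGroup M] [Module A M]
  (ℳ 𝒩 : ℤ → AddSubgroup M) [DirectSum.Decomposition ℳ] [DirectSum.Decomposition 𝒩]

noncomputable def shiftComponent (d : ℤ) : M →+ M :=
  (toAddMonoid fun j => (𝒩 (j + d)).subtype.comp <|
      (DFinsupp.evalAddMonoidHom (j + d)).comp <|
        (decomposeAddEquiv 𝒩).toAddMonoidHom.comp (ℳ j).subtype).comp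
    (decomposeAddEquiv ℳ).toAddMonoidHom

variable {ℳ} in
theorem shiftComponent_of_mem {j : ℤ} {x : M} (hx : x ∈ ℳ j) (d : ℤ) :
    shiftComponent ℳ 𝒩 d x = decompose 𝒩 x (j + d) := by
  simp [shiftComponent, decompose_of_mem ℳ hx, DFinsupp.evalAddMonoidHom]

variable {ℳ} in
theorem shiftComponent_mem_of_mem {j : ℤ} {x : M} (hx : x ∈ ℳ j) (d : ℤ) :
    shiftComponent ℳ 𝒩 d x ∈ 𝒩 (j + d) :=
  shiftComponent_of_mem 𝒩 hx d ▸ SetLike.coe_mem _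

theorem exists_sum_shiftComponent_eq (x : M) :
    ∃ T : Finset ℤ, ∀ S, T ⊆ S → ∑ d ∈ S, shiftComponent ℳ 𝒩 d x = x := by
  classical
  induction x using DirectSum.Decomposition.inductionOn (ℳ := ℳ) with
  | zero => exact ⟨∅, fun S _ => by simp⟩
  | @homogeneous j x =>
    obtain ⟨x, hx⟩ := x
    refine ⟨(decompose 𝒩 x).support.image (· - j), fun S hS => ?_⟩
    have hsupp : (decompose 𝒩 x).support ⊆ S.image (j + ·) := fun i hi =>
      Finset.mem_image.mpr ⟨i - j, hS (Finset.mem_image_of_mem _ hi), by omega⟩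
    calc ∑ d ∈ S, shiftComponent ℳ 𝒩 d x
        = ∑ i ∈ S.image (j + ·), (decompose 𝒩 x i : M) := by
          rw [Finset.sum_image fun _ _ _ _ h => add_left_cancel h]
          exact Finset.sum_congr rfl fun d _ => shiftComponent_of_mem 𝒩 hx d
      _ = ∑ i ∈ (decompose 𝒩 x).support, (decompose 𝒩 x i : M) :=
          (Finset.sum_subset hsupp fun i _ hi => by simp [DFinsupp.notMem_support_iff.mp hi]).symm
      _ = x := sum_support_decompose 𝒩 x
  | add x y hx hy =>
    obtain ⟨Tx, hTx⟩ := hx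
    obtain ⟨Ty, hTy⟩ := hy
    refine ⟨Tx ∪ Ty, fun S hS => ?_⟩
    rw [Finset.union_subset_iff] at hS
    simp only [map_add, Finset.sum_add_distrib, hTx S hS.1, hTy S hS.2]

end ShiftComponent

namespace IsGradedSMul

variable {A M : Type*} [Ring A] [AddCommGroup M] [Module A M]
  {𝒜 : ℤ → AddSubgroup A} {ℳ 𝒩 : ℤ → AddSubgroup M}
  [DirectSum.Decomposition ℳ] [DirectSum.Decomposition 𝒩]

theorem decompose_smul_of_mem_s8 (h𝒩 : IsGradedSMul 𝒜 𝒩) {i : ℤ} {a : A} (ha : a ∈ 𝒜 i)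
    (k : ℤ) (x : M) : (decompose 𝒩 (a • x) (i + k) : M) = a • (decompose 𝒩 x k : M) := by
  induction x using DirectSum.Decomposition.inductionOn (ℳ := 𝒩) with
  | zero => simp
  | @homogeneous l x =>
    obtain ⟨x, hx⟩ := x
    by_cases hlk : l = k
    · subst hlk
      rw [decompose_of_mem_same _ hx, decompose_of_mem_same _ (h𝒩 ha hx)]
    · rw [decompose_of_mem_ne _ hx hlk, smul_zero,
        decompose_of_mem_ne _ (h𝒩 ha hx) (by omega)]
  | add x y hx hy =>
    simp only [smul_add, decompose_add, DirectSum.add_apply, AddSubgroup.coe_add, hx, hy]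

theorem shiftComponent_smul [DirectSum.Decomposition 𝒜] (hℳ : IsGradedSMul 𝒜 ℳ)
    (h𝒩 : IsGradedSMul 𝒜 𝒩) (d : ℤ) (a : A) (x : M) :
    shiftComponent ℳ 𝒩 d (a • x) = a • shiftComponent ℳ 𝒩 d x := by
  induction a using DirectSum.Decomposition.inductionOn (ℳ := 𝒜) with
  | zero => simp
  | @homogeneous i a =>
    obtain ⟨a, ha⟩ := a
    induction x using DirectSum.Decomposition.inductionOn (ℳ := ℳ) with
    | zero => simp
    | @homogeneous j x =>
      obtain ⟨x, hx⟩ := x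
      rw [shiftComponent_of_mem 𝒩 hx, shiftComponent_of_mem 𝒩 (hℳ ha hx), add_assoc,
        h𝒩.decompose_smul_of_mem_s8 ha]
    | add x y hx hy => rw [smul_add, map_add, map_add, hx, hy, smul_add]
  | add a b ha hb => rw [add_smul, map_add, ha, hb, add_smul]

variable [DirectSum.Decomposition 𝒜] (hℳ : IsGradedSMul 𝒜 ℳ) (h𝒩 : IsGradedSMul 𝒜 𝒩)

noncomputable def shiftComponentₗ (d : ℤ) : Module.End A M where
  toFun := shiftComponent ℳ 𝒩 d
  map_add' := map_add _
  map_smul' := hℳ.shiftComponent_smul h𝒩 d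

theorem exists_sum_shiftComponentₗ_eq_one [Module.Finite A M] :
    ∃ S : Finset ℤ, ∑ d ∈ S, hℳ.shiftComponentₗ h𝒩 d = 1 := by
  classical
  obtain ⟨s, hs⟩ := Module.Finite.fg_top (R := A) (M := M)
  choose T hT using exists_sum_shiftComponent_eq ℳ 𝒩
  refine ⟨s.biUnion T, LinearMap.ext_on hs fun x hx => ?_⟩
  simpa [shiftComponentₗ] using hT x _ (Finset.subset_biUnion_of_mem T hx)

end IsGradedSMul

theorem gradings_on_indecomposable_iso_up_to_shift_general
    {A : Type*} [Ring A]
    (𝒜 : ℤ → AddSubgroup A) [GradedRing 𝒜]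
    {M : Type*} [AddCommGroup M] [Module A M]
    (hfl : IsFiniteLength A M) (hM : Nontrivial M)
    (hind : ∀ p q : Submodule A M, IsCompl p q → p = ⊥ ∨ q = ⊥)
    (ℳ : ℤ → AddSubgroup M) [DirectSum.Decomposition ℳ] (hℳ : IsGradedSMul 𝒜 ℳ)
    (𝒩 : ℤ → AddSubgroup M) [DirectSum.Decomposition 𝒩] (h𝒩 : IsGradedSMul 𝒜 𝒩) :
    ∃ (i : ℤ) (e : M ≃ₗ[A] M), ∀ (j : ℤ), ∀ x ∈ ℳ j, e x ∈ 𝒩 (i + j) := by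
  obtain ⟨_, _⟩ := isFiniteLength_iff_isNoetherian_isArtinian.mp hfl
  have := Module.End.isLocalRing_of_indecomposable hind
  obtain ⟨S, hS⟩ := hℳ.exists_sum_shiftComponentₗ_eq_one h𝒩
  obtain ⟨d, -, hd⟩ := IsLocalRing.exists_of_isUnit_sum (hS ▸ isUnit_one)
  refine ⟨d, LinearMap.GeneralLinearGroup.toLinearEquiv hd.unit, fun j x hx => ?_⟩
  rw [add_comm]
  exact shiftComponent_mem_of_mem 𝒩 hx d

/-- **Uniqueness of gradings on indecomposable modules.**
Let `A` be a `ℤ`-graded left-artinian ring and `M` an indecomposable `A`-module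
of finite length.  If `ℳ` and `𝒩` are two `ℤ`-gradings of `M` compatible with
the module structure, then the two graded modules are isomorphic up to a shift
of the grading: there are `i : ℤ` and an `A`-linear automorphism `e` of `M`
carrying `ℳ j` into `𝒩 (i + j)` for all `j`. -/
theorem gradings_on_indecomposable_iso_up_to_shift
    {A : Type*} [Ring A] [IsArtinian A A]
    (𝒜 : ℤ → AddSubgroup A) [GradedRing 𝒜]
    {M : Type*} [AddCommGroup M] [Module A M]
    (hfl : IsFiniteLength A M) (hM : Nontrivial M)
    (hind : ∀ p q : Submodule A M, IsCompl p q → p = ⊥ ∨ q = ⊥)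
    (ℳ : ℤ → AddSubgroup M) [DirectSum.Decomposition ℳ] (hℳ : IsGradedSMul 𝒜 ℳ)
    (𝒩 : ℤ → AddSubgroup M) [DirectSum.Decomposition 𝒩] (h𝒩 : IsGradedSMul 𝒜 𝒩) :
    ∃ (i : ℤ) (e : M ≃ₗ[A] M), ∀ (j : ℤ), ∀ x ∈ ℳ j, e x ∈ 𝒩 (i + j) :=
  gradings_on_indecomposable_iso_up_to_shift_general 𝒜 hfl hM hind ℳ hℳ 𝒩 h𝒩
end

section
/- Let S = S(𝔥) be the symmetric algebra of a finite-dimensional complex vector space 𝔥 with an action of a finite group W by linear automorphisms, let λ ⊂ S be a maximal ideal with isotropy group W_λ, and let Y = S^{W_λ}. Then the natural map from the completion of Y at μ = λ ∩ Y to the W_λ-invariants of the completion of S at λ is an isomorphism: Y^∧_μ ≅ (S^∧_λ)^{W_λ}. -/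
set_option synthInstance.maxHeartbeats 1000000
set_option maxHeartbeats 1000000

/-- The `I`-adic completion of `R`, realized concretely as compatible sequences
in the quotients `R ⧸ Iⁿ`. -/
def Cmpl {R : Type*} [CommRing R] (I : Ideal R) : Type _ :=
  { s : ∀ n : ℕ, R ⧸ I ^ n //
    ∀ (n : ℕ) (x : R), Ideal.Quotient.mk (I ^ (n + 1)) x = s (n + 1) →
      Ideal.Quotient.mk (I ^ n) x = s n }

/-- The subring of invariants under the isotropy group of a maximal ideal `l`:
elements fixed by every `w` stabilizing `l`. -/
def isotropyInvariants (W : Type*) [Group W] {S : Type*} [CommRing S]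
    [MulSemiringAction W S] (l : Ideal S) : Subring S where
  carrier := {x | ∀ w : W, (∀ a ∈ l, w • a ∈ l) → w • x = x}
  zero_mem' := fun w _ => smul_zero w
  one_mem' := fun w _ => smul_one w
  add_mem' := fun hx hy w hw => by rw [smul_add, hx w hw, hy w hw]
  mul_mem' := fun hx hy w hw => by rw [smul_mul', hx w hw, hy w hw]
  neg_mem' := fun hx w hw => by rw [smul_neg, hx w hw]

/-! Let `H = W_l`, `Y = S^H` and `μ = l ∩ Y`. Averaging over `H` is a `Y`-linear retraction
`S → Y`; hence `J S ∩ Y = J` for every ideal `J` of `Y`, and every `H`-invariant class modulo `lⁿ`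
has a representative in `Y`. Every `x ∈ l` is a root of `∏_{h ∈ H} (X - h • x)`, a monic
polynomial over `Y` whose lower coefficients lie in `μ`, so `l ⊆ √(μ S)` and, `S` being
Noetherian, `l ^ k ⊆ μ S` for some `k`. Therefore `l ^ (k n) ∩ Y ⊆ μⁿ S ∩ Y = μⁿ ⊆ lⁿ ∩ Y`: the
`μ`-adic filtration of `Y` is cofinal with the one induced by `l`, which gives injectivity, and
averaged lifts of an invariant element of the completion assemble into a preimage. -/

namespace MulSemiringAction

open Polynomial

variable {G B : Type*} [Group G] [Fintype G] [CommRing B] [MulSemiringAction G B]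

theorem coeff_charpoly_mem {I : Ideal B} {x : B} (hx : ∀ g : G, g • x ∈ I) {n : ℕ}
    (hn : n < Fintype.card G) : (charpoly G x).coeff n ∈ I := by
  have hmap : (charpoly G x).map (Ideal.Quotient.mk I) = X ^ Fintype.card G := by
    simp [charpoly_eq, Polynomial.map_prod, Ideal.Quotient.eq_zero_iff_mem.2 (hx _)]
  rw [← Ideal.Quotient.eq_zero_iff_mem, ← coeff_map, hmap, coeff_X_pow, if_neg hn.ne]

theorem pow_card_mem_map_comap (A : Type*) [CommRing A] [Algebra A B]
    [Algebra.IsInvariant A B G] {I : Ideal B} (hI : ∀ g : G, ∀ a ∈ I, g • a ∈ I) {x : B}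
    (hx : x ∈ I) : x ^ Fintype.card G ∈ (I.comap (algebraMap A B)).map (algebraMap A B) := by
  obtain ⟨p, hp, hdeg, hmonic⟩ := lifts_and_natDegree_eq_and_monic
    (Algebra.IsInvariant.charpoly_mem_lifts A B G x) (monic_charpoly G x)
  have hcard : (charpoly G x).natDegree ≤ Fintype.card G := by
    rw [charpoly_eq]
    refine (natDegree_prod_le _ _).trans ?_
    simpa using Finset.sum_le_card_nsmul Finset.univ _ 1 fun g _ => (natDegree_X_sub_C_le (g • x))
  have heis : p.IsWeaklyEisensteinAt (I.comap (algebraMap A B)) := ⟨fun {n} hn => by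
    rw [Ideal.mem_comap, ← coeff_map, hp]
    exact coeff_charpoly_mem (fun g => hI g x hx) (hn.trans_le (hdeg ▸ hcard))⟩
  refine heis.pow_natDegree_le_of_aeval_zero_of_monic_mem_map ?_ hmonic _ (by rw [hp]; exact hcard)
  rw [aeval_def, eval₂_eq_eval_map, hp, eval_charpoly]

variable [Algebra ℚ B]

variable (G) in
noncomputable def reynolds : B →ₗ[ℚ] B :=
  (Fintype.card G : ℚ)⁻¹ • ∑ g : G, DistribSMul.toLinearMap ℚ B g

theorem reynolds_apply (x : B) :
    reynolds G x = (Fintype.card G : ℚ)⁻¹ • ∑ g : G, g • x := by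
  simp [reynolds]

theorem smul_reynolds (g : G) (x : B) : g • reynolds G x = reynolds G x := by
  rw [reynolds_apply, smul_comm, Finset.smul_sum]
  congr 1
  exact Fintype.sum_equiv (Equiv.mulLeft g) _ _ fun h => (mul_smul g h x).symm

theorem reynolds_sub_self_mem {I : Ideal B} {x : B} (hx : ∀ g : G, g • x - x ∈ I) :
    reynolds G x - x ∈ I := by
  have hcard : (Fintype.card G : ℚ) ≠ 0 := Nat.cast_ne_zero.2 Fintype.card_ne_zero
  have hsum : reynolds G x - x = (Fintype.card G : ℚ)⁻¹ • ∑ g : G, (g • x - x) := by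
    rw [reynolds_apply, Finset.sum_sub_distrib, smul_sub, Finset.sum_const, Finset.card_univ,
      ← Nat.cast_smul_eq_nsmul ℚ, smul_smul, inv_mul_cancel₀ hcard, one_smul]
  rw [hsum, Algebra.smul_def]
  exact I.mul_mem_left _ (I.sum_mem fun g _ => hx g)

theorem reynolds_eq_self {x : B} (hx : ∀ g : G, g • x = x) : reynolds G x = x := by
  simpa [hx, sub_eq_zero] using reynolds_sub_self_mem (G := G) (I := ⊥) (x := x)

theorem reynolds_mul {y : B} (hy : ∀ g : G, g • y = y) (x : B) :
    reynolds G (y * x) = y * reynolds G x := by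
  simp only [reynolds_apply, smul_mul', hy, ← Finset.mul_sum, mul_smul_comm]

theorem comap_map_subtype_eq {Y : Subring B} (hY : ∀ y ∈ Y, ∀ g : G, g • y = y)
    (hρ : ∀ x, reynolds G x ∈ Y) (J : Ideal Y) : (J.map Y.subtype).comap Y.subtype = J := by
  refine le_antisymm (fun y hy => ?_) Ideal.le_comap_map
  -- Quantifying over `s` makes the property stable under multiplication by elements of `B`.
  have key : ∀ x ∈ J.map Y.subtype, ∀ s : B, (⟨reynolds G (s * x), hρ _⟩ : Y) ∈ J := by
    intro x hx
    induction hx using Submodule.span_induction with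
    | mem _ hz =>
      obtain ⟨z, hz, rfl⟩ := hz
      intro s
      have : (⟨reynolds G (s * z), hρ _⟩ : Y) = z * ⟨reynolds G s, hρ s⟩ :=
        Subtype.ext (by simp [mul_comm s, reynolds_mul (hY _ z.2)])
      exact this ▸ J.mul_mem_right _ hz
    | zero =>
      intro s
      convert J.zero_mem
      simp
    | add a b _ _ ha hb =>
      intro s
      convert J.add_mem (ha s) (hb s) using 1
      ext
      simp [mul_add]
    | smul a x _ hx => simpa [mul_assoc] using fun s => hx (s * a)
  simpa [reynolds_eq_self (hY _ y.2)] using key _ hy 1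

end MulSemiringAction

section Isotropy

variable (W : Type*) [Group W] {S : Type*} [CommRing S] [MulSemiringAction W S] (l : Ideal S)

def isotropySubmonoid : Submonoid W where
  carrier := {w | ∀ a ∈ l, w • a ∈ l}
  one_mem' a ha := by rwa [one_smul]
  mul_mem' hv hw a ha := by rw [mul_smul]; exact hv _ (hw a ha)

-- In a finite group `w⁻¹` is a power of `w`.
def isotropy [Finite W] : Subgroup W :=
  { isotropySubmonoid W l with
    inv_mem' := fun {w} hw => Submonoid.powers_le.2 hw
      (mem_powers_iff_mem_zpowers.2 (inv_mem (Subgroup.mem_zpowers w))) }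

variable {W l}

theorem mem_isotropyInvariants_iff [Finite W] {x : S} :
    x ∈ isotropyInvariants W l ↔ ∀ w : isotropy W l, (w : W) • x = x :=
  ⟨fun h w => h w w.2, fun h w hw => h ⟨w, hw⟩⟩

instance [Finite W] : Algebra.IsInvariant (isotropyInvariants W l) S (isotropy W l) :=
  ⟨fun x hx => ⟨⟨x, mem_isotropyInvariants_iff.2 hx⟩, rfl⟩⟩

theorem smul_mem_pow_of_forall_smul_mem {w : W} (hw : ∀ a ∈ l, w • a ∈ l) {n : ℕ} {a : S}
    (ha : a ∈ l ^ n) : w • a ∈ l ^ n := by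
  have hmap : (l.map (MulSemiringAction.toRingHom W S w)) ^ n ≤ l ^ n :=
    Ideal.pow_right_mono (Ideal.map_le_iff_le_comap.2 hw) n
  rw [← Ideal.map_pow] at hmap
  exact hmap (Ideal.mem_map_of_mem _ ha)

theorem mk_smul_eq_of_mk_eq {w : W} (hw : ∀ a ∈ l, w • a ∈ l) {n : ℕ} {x y : S}
    (hy : y ∈ isotropyInvariants W l) (h : Ideal.Quotient.mk (l ^ n) x = Ideal.Quotient.mk _ y) :
    Ideal.Quotient.mk (l ^ n) (w • x) = Ideal.Quotient.mk _ y := by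
  rw [Ideal.Quotient.eq] at h ⊢
  rw [← hy w hw, ← smul_sub]
  exact smul_mem_pow_of_forall_smul_mem hw h

variable [Finite W] [Algebra ℚ S]

variable (W l) in
noncomputable def isotropyReynolds (x : S) : isotropyInvariants W l :=
  letI := Fintype.ofFinite (isotropy W l)
  ⟨MulSemiringAction.reynolds (isotropy W l) x,
    mem_isotropyInvariants_iff.2 fun w => MulSemiringAction.smul_reynolds w x⟩

theorem mk_isotropyReynolds {n : ℕ} {x : S}
    (hx : ∀ w ∈ isotropy W l, Ideal.Quotient.mk (l ^ n) (w • x) = Ideal.Quotient.mk _ x) :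
    Ideal.Quotient.mk (l ^ n) (isotropyReynolds W l x) = Ideal.Quotient.mk _ x := by
  let := Fintype.ofFinite (isotropy W l)
  rw [Ideal.Quotient.eq]
  exact MulSemiringAction.reynolds_sub_self_mem fun w => Ideal.Quotient.eq.1 (hx w w.2)

variable (W l) in
theorem exists_comap_pow_mul_le_pow_comap [IsNoetherianRing S] :
    ∃ k, 0 < k ∧ ∀ n, (l ^ (k * n)).comap (isotropyInvariants W l).subtype ≤
      (l.comap (isotropyInvariants W l).subtype) ^ n := by
  let := Fintype.ofFinite (isotropy W l)
  set Y := isotropyInvariants W l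
  have hrad : l ≤ ((l.comap Y.subtype).map Y.subtype).radical := fun x hx =>
    ⟨_, MulSemiringAction.pow_card_mem_map_comap Y (fun w : isotropy W l => w.2) hx⟩
  obtain ⟨k, hk⟩ := Ideal.exists_pow_le_of_le_radical_of_fg hrad (IsNoetherian.noetherian l)
  refine ⟨k + 1, k.succ_pos, fun n => ?_⟩
  calc (l ^ ((k + 1) * n)).comap Y.subtype
      ≤ (((l.comap Y.subtype).map Y.subtype) ^ n).comap Y.subtype := by
        rw [pow_mul]
        exact Ideal.comap_mono <|
          Ideal.pow_right_mono ((Ideal.pow_le_pow_right k.le_succ).trans hk) n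
    _ = (l.comap Y.subtype) ^ n := by
        rw [← Ideal.map_pow, MulSemiringAction.comap_map_subtype_eq
          (fun y hy w => mem_isotropyInvariants_iff.1 hy w)
          (fun x => (isotropyReynolds W l x).2)]

end Isotropy

namespace Cmpl

variable {R : Type*} [CommRing R] {I : Ideal R}

theorem mk_eq_of_le (t : Cmpl I) {x : R} {m n : ℕ} (hnm : n ≤ m)
    (hx : Ideal.Quotient.mk (I ^ m) x = t.1 m) : Ideal.Quotient.mk (I ^ n) x = t.1 n := by
  induction hnm with
  | refl => exact hx
  | step _ ih => exact ih (t.2 _ x hx)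

variable {S : Type*} [CommRing S] {J : Ideal S} {f : R →+* S} {Φ : Cmpl I → Cmpl J}
  {k : ℕ}

theorem injective_of_comap_pow_le
    (hΦ : ∀ t n x, Ideal.Quotient.mk (I ^ n) x = t.1 n →
      Ideal.Quotient.mk (J ^ n) (f x) = (Φ t).1 n)
    (hk : 0 < k) (hkJ : ∀ n, (J ^ (k * n)).comap f ≤ I ^ n) : Function.Injective Φ := by
  intro t t' h
  refine Subtype.ext (funext fun n => ?_)
  obtain ⟨x, hx⟩ := Ideal.Quotient.mk_surjective (t.1 (k * n))
  obtain ⟨x', hx'⟩ := Ideal.Quotient.mk_surjective (t'.1 (k * n))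
  have hdiff : x - x' ∈ I ^ n := hkJ n <| by
    rw [Ideal.mem_comap, map_sub, ← Ideal.Quotient.eq, hΦ t _ x hx, hΦ t' _ x' hx', h]
  have hn : n ≤ k * n := Nat.le_mul_of_pos_left n hk
  rw [← t.mk_eq_of_le hn hx, ← t'.mk_eq_of_le hn hx', Ideal.Quotient.eq]
  exact hdiff

theorem mem_range_of_forall_mk_eq
    (hΦ : ∀ t n x, Ideal.Quotient.mk (I ^ n) x = t.1 n →
      Ideal.Quotient.mk (J ^ n) (f x) = (Φ t).1 n)
    (hk : 0 < k) (hkJ : ∀ n, (J ^ (k * n)).comap f ≤ I ^ n) (s : Cmpl J) (x : ℕ → R)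
    (hx : ∀ n, Ideal.Quotient.mk (J ^ n) (f (x n)) = s.1 n) : s ∈ Set.range Φ := by
  have hcompat : ∀ {m n}, n ≤ m → x (k * m) - x (k * n) ∈ I ^ n := fun {m n} h => hkJ n <| by
    rw [Ideal.mem_comap, map_sub, ← Ideal.Quotient.eq,
      s.mk_eq_of_le (Nat.mul_le_mul_left k h) (hx _), hx]
  refine ⟨⟨fun n => Ideal.Quotient.mk (I ^ n) (x (k * n)), fun n y hy => ?_⟩,
    Subtype.ext (funext fun n => ?_)⟩
  · rw [Ideal.Quotient.eq] at hy ⊢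
    simpa using add_mem (Ideal.pow_le_pow_right n.le_succ hy) (hcompat n.le_succ)
  · exact (hΦ _ n _ rfl).symm.trans (s.mk_eq_of_le (Nat.le_mul_of_pos_left n hk) (hx _))

end Cmpl

theorem completion_of_isotropy_invariants_bijective_general
    (d : ℕ) (W : Type*) [Group W] [Fintype W]
    [MulSemiringAction W (MvPolynomial (Fin d) ℂ)]
    (l : Ideal (MvPolynomial (Fin d) ℂ))
    (Φ : Cmpl (Ideal.comap (isotropyInvariants W l).subtype l) → Cmpl l)
    (hΦ : ∀ (t : Cmpl (Ideal.comap (isotropyInvariants W l).subtype l))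
        (n : ℕ) (x : (isotropyInvariants W l)),
      Ideal.Quotient.mk ((Ideal.comap (isotropyInvariants W l).subtype l) ^ n) x
          = t.1 n →
      Ideal.Quotient.mk (l ^ n) (x : MvPolynomial (Fin d) ℂ) = (Φ t).1 n) :
    Function.Injective Φ ∧
    Set.range Φ = { s : Cmpl l |
      ∀ w : W, (∀ a ∈ l, w • a ∈ l) →
        ∀ (n : ℕ) (x : MvPolynomial (Fin d) ℂ),
          Ideal.Quotient.mk (l ^ n) x = s.1 n →
          Ideal.Quotient.mk (l ^ n) (w • x) = s.1 n } := by
  obtain ⟨k, hk, hkl⟩ := exists_comap_pow_mul_le_pow_comap W l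
  refine ⟨Cmpl.injective_of_comap_pow_le hΦ hk hkl, Set.Subset.antisymm ?_ fun s hs => ?_⟩
  · rintro _ ⟨t, rfl⟩ w hw n x hx
    obtain ⟨y, hy⟩ := Ideal.Quotient.mk_surjective (t.1 n)
    rw [← hΦ t n y hy] at hx ⊢
    exact mk_smul_eq_of_mk_eq hw y.2 hx
  · choose x hx using fun n => Ideal.Quotient.mk_surjective (s.1 n)
    refine Cmpl.mem_range_of_forall_mk_eq hΦ hk hkl s (fun n => isotropyReynolds W l (x n))
      fun n => ?_
    exact (mk_isotropyReynolds fun w hw => (hs w hw n _ (hx n)).trans (hx n).symm).trans (hx n)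

/-- **Invariants commute with completion.**
Let `S = Sym(𝔥) = ℂ[x₁,…,x_d]` be the symmetric algebra of a finite-dimensional
complex vector space with a finite group `W` acting by (ℂ-linear) algebra
automorphisms preserving the linear part, let `l ⊂ S` be a maximal ideal with
isotropy group `W_l`, `Y = S^{W_l}` and `μ = l ∩ Y`.  Then the natural map
`Y^∧_μ → (S^∧_l)^{W_l}` is an isomorphism: any map `Φ` between the concrete
completions which is induced by the inclusion `Y ⊆ S` is injective with image
exactly the `W_l`-invariant elements of `S^∧_l`. -/
theorem completion_of_isotropy_invariants_bijective
    (d : ℕ) (W : Type*) [Group W] [Fintype W]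
    [MulSemiringAction W (MvPolynomial (Fin d) ℂ)]
    [SMulCommClass W ℂ (MvPolynomial (Fin d) ℂ)]
    (hlin : ∀ (w : W) (p : MvPolynomial (Fin d) ℂ),
      p.IsHomogeneous 1 → (w • p).IsHomogeneous 1)
    (l : Ideal (MvPolynomial (Fin d) ℂ)) (hmax : l.IsMaximal)
    (Φ : Cmpl (Ideal.comap (isotropyInvariants W l).subtype l) → Cmpl l)
    (hΦ : ∀ (t : Cmpl (Ideal.comap (isotropyInvariants W l).subtype l))
        (n : ℕ) (x : (isotropyInvariants W l)),
      Ideal.Quotient.mk ((Ideal.comap (isotropyInvariants W l).subtype l) ^ n) x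
          = t.1 n →
      Ideal.Quotient.mk (l ^ n) (x : MvPolynomial (Fin d) ℂ) = (Φ t).1 n) :
    Function.Injective Φ ∧
    Set.range Φ = { s : Cmpl l |
      ∀ w : W, (∀ a ∈ l, w • a ∈ l) →
        ∀ (n : ℕ) (x : MvPolynomial (Fin d) ℂ),
          Ideal.Quotient.mk (l ^ n) x = s.1 n →
          Ideal.Quotient.mk (l ^ n) (w • x) = s.1 n } :=
  completion_of_isotropy_invariants_bijective_general d W l Φ hΦ
end

section
/- Let A be a left-artinian ring with enough structure so that A-Modf is an artinian category, and suppose à is a ℤ-grading on A. If M is an ungraded A-module of finite length, N a graded A-module, and π : M ↠ N a surjection of ungraded modules, then there exists a graded A-module P and a surjection of ungraded modules vP ↠ M such that the composite vP → N is obtained by forgetting the grading on a morphism of graded modules P → N. -/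
/-!
Take the free `A`-module `P` on one generator for each `x : M` whose image `π x` is homogeneous,
placed in the degree of `π x`, and let `ρ` send each generator to its `x`. Then `π ∘ ρ` is graded,
and `ρ` is onto: for `m : M`, lift each homogeneous component of `π m` to `M`; the sum of these
lifts differs from `m` by an element of `ker π`, whose image `0` is homogeneous of every degree.
-/

universe u

/-- A bundled `ℤ`-graded module over a `ℤ`-graded ring `(A, 𝒜)`. -/
structure GradedModuleOver (A : Type u) [Ring A] (𝒜 : ℤ → AddSubgroup A) :
    Type (u + 1) where
  carrier : Type u
  [isAddCommGroup : AddCommGroup carrier]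
  [isModule : Module A carrier]
  grading : ℤ → AddSubgroup carrier
  [isDecomposition : DirectSum.Decomposition grading]
  smul_mem : ∀ ⦃i j : ℤ⦄ ⦃a : A⦄ ⦃m : carrier⦄,
    a ∈ 𝒜 i → m ∈ grading j → a • m ∈ grading (i + j)

attribute [instance] GradedModuleOver.isAddCommGroup GradedModuleOver.isModule
  GradedModuleOver.isDecomposition

open DirectSum

namespace Finsupp

section ShiftGrading

variable {ι G M : Type*} [AddGroup G] [AddCommGroup M] (ℳ : G → AddSubgroup M) (d : ι → G)

def shiftGrading (j : G) : AddSubgroup (ι →₀ M) where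
  carrier := {f | ∀ i, f i ∈ ℳ (j - d i)}
  add_mem' hf hg i := add_mem (hf i) (hg i)
  zero_mem' _ := zero_mem _
  neg_mem' hf i := neg_mem (hf i)

variable {ℳ d}

theorem single_mem_shiftGrading {i : ι} {k : G} {m : M} (hm : m ∈ ℳ k) :
    single i m ∈ shiftGrading ℳ d (k + d i) := by
  classical
  intro i'
  rcases eq_or_ne i i' with rfl | h
  · simpa using hm
  · simp [single_eq_of_ne' h]

variable [DecidableEq G] [Decomposition ℳ]

theorem iSupIndep_shiftGrading : iSupIndep (shiftGrading ℳ d) := by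
  intro j
  rw [AddSubgroup.disjoint_def]
  intro f hfj hf
  ext i
  have hcoord : f i ∈ ⨆ (k : G) (_ : k ≠ j - d i), ℳ k := by
    refine AddSubgroup.mem_comap.mp <|
      (AddSubgroup.map_le_iff_le_comap (f := applyAddHom i)).mp ?_ hf
    rw [AddSubgroup.map_iSup]
    refine iSup_le fun k => ?_
    rw [AddSubgroup.map_iSup]
    refine iSup_le fun hk => ?_
    rintro _ ⟨g, hg, rfl⟩
    exact AddSubgroup.mem_iSup_of_mem (k - d i) <|
      AddSubgroup.mem_iSup_of_mem (fun h => hk (sub_left_injective h)) (hg i)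
  exact (Decomposition.isInternal ℳ).addSubgroup_iSupIndep (j - d i) |>.le_bot ⟨hfj i, hcoord⟩

theorem isInternal_shiftGrading : IsInternal (shiftGrading ℳ d) := by
  classical
  refine ⟨iSupIndep_shiftGrading.dfinsuppSumAddHom_injective, fun f => ?_⟩
  change f ∈ AddMonoidHom.mrange (DirectSum.coeAddMonoidHom (shiftGrading ℳ d))
  induction f using induction_linear with
  | zero => exact zero_mem _
  | add f g hf hg => exact add_mem hf hg
  | single i m =>
    rw [← sum_support_decompose ℳ m, single_finsetSum]
    exact sum_mem fun k _ =>
      ⟨of _ _ ⟨_, single_mem_shiftGrading (decompose ℳ m k).2⟩, coeAddMonoidHom_of _ _ _⟩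

noncomputable instance : Decomposition (shiftGrading ℳ d) :=
  isInternal_shiftGrading.chooseDecomposition

end ShiftGrading

variable {ι A N : Type*} [Ring A] [AddCommGroup N] [Module A N] {𝒜 : ℤ → AddSubgroup A}
  {𝒩 : ℤ → AddSubgroup N} {d : ι → ℤ}

theorem smul_mem_shiftGrading [SetLike.GradedMul 𝒜] {k j : ℤ} {a : A} {f : ι →₀ A}
    (ha : a ∈ 𝒜 k) (hf : f ∈ shiftGrading 𝒜 d j) : a • f ∈ shiftGrading 𝒜 d (k + j) := by
  intro i
  rw [smul_apply, smul_eq_mul, add_sub_assoc]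
  exact SetLike.mul_mem_graded ha (hf i)

theorem linearCombination_mem_of_mem_shiftGrading
    (h𝒩 : ∀ ⦃i j : ℤ⦄ ⦃a : A⦄ ⦃n : N⦄, a ∈ 𝒜 i → n ∈ 𝒩 j → a • n ∈ 𝒩 (i + j))
    {v : ι → N} (hv : ∀ i, v i ∈ 𝒩 (d i)) {j : ℤ} {f : ι →₀ A} (hf : f ∈ shiftGrading 𝒜 d j) :
    linearCombination A v f ∈ 𝒩 j :=
  sum_mem fun i _ => by simpa using h𝒩 (hf i) (hv i)

end Finsupp

noncomputable def GradedModuleOver.free {A : Type u} [Ring A] (𝒜 : ℤ → AddSubgroup A)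
    [GradedRing 𝒜] {ι : Type u} (d : ι → ℤ) : GradedModuleOver A 𝒜 where
  carrier := ι →₀ A
  grading := Finsupp.shiftGrading 𝒜 d
  smul_mem _ _ _ _ := Finsupp.smul_mem_shiftGrading

theorem Submodule.span_setOf_isHomogeneousElem_apply_eq_top {R G M N : Type*} [Ring R]
    [AddCommGroup M] [Module R M] [AddCommGroup N] [Module R N] [DecidableEq G] [Zero G]
    (𝒩 : G → AddSubgroup N) [Decomposition 𝒩] {π : M →ₗ[R] N} (hπ : Function.Surjective π) :
    span R {x | SetLike.IsHomogeneousElem 𝒩 (π x)} = ⊤ := by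
  classical
  choose lift hlift using hπ
  refine eq_top_iff.mpr fun m _ => ?_
  let components := (decompose 𝒩 (π m)).support
  have hker : π (m - ∑ j ∈ components, lift (decompose 𝒩 (π m) j)) ∈ 𝒩 0 := by
    simp only [map_sub, map_sum, hlift, components, sum_support_decompose, sub_self, zero_mem]
  rw [← sub_add_cancel m (∑ j ∈ components, lift (decompose 𝒩 (π m) j))]
  refine add_mem (subset_span ⟨0, hker⟩) (sum_mem fun j _ => subset_span ⟨j, ?_⟩)
  rw [hlift]
  exact (decompose 𝒩 (π m) j).2

theorem exists_graded_cover_of_surjection_onto_graded_general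
    {A : Type u} [Ring A]
    (𝒜 : ℤ → AddSubgroup A) [GradedRing 𝒜]
    {M N : Type u} [AddCommGroup M] [Module A M] [AddCommGroup N] [Module A N]
    (𝒩 : ℤ → AddSubgroup N) [DirectSum.Decomposition 𝒩]
    (h𝒩 : ∀ ⦃i j : ℤ⦄ ⦃a : A⦄ ⦃n : N⦄, a ∈ 𝒜 i → n ∈ 𝒩 j → a • n ∈ 𝒩 (i + j))
    (π : M →ₗ[A] N) (hπ : Function.Surjective π) :
    ∃ (P : GradedModuleOver A 𝒜) (ρ : P.carrier →ₗ[A] M),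
      Function.Surjective ρ ∧
      ∀ (j : ℤ), ∀ x ∈ P.grading j, π (ρ x) ∈ 𝒩 j := by
  let ι := {p : M × ℤ // π p.1 ∈ 𝒩 p.2}
  let ρ := Finsupp.linearCombination A fun p : ι => p.1.1
  have hρ : Function.Surjective ρ := by
    rw [← LinearMap.range_eq_top, Finsupp.range_linearCombination, eq_top_iff,
      ← Submodule.span_setOf_isHomogeneousElem_apply_eq_top 𝒩 hπ]
    exact Submodule.span_mono fun x ⟨j, hx⟩ => ⟨⟨(x, j), hx⟩, rfl⟩
  refine ⟨GradedModuleOver.free 𝒜 fun p : ι => p.1.2, ρ, hρ, fun j (f : ι →₀ A) hf => ?_⟩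
  have hπρ := Finsupp.linearCombination_mem_of_mem_shiftGrading h𝒩 (v := π ∘ _) (fun p => p.2) hf
  rwa [← Finsupp.apply_linearCombination] at hπρ

/-- **Graded covering of surjections onto graded modules.**
Let `A` be a `ℤ`-graded left-artinian ring, `M` an ungraded `A`-module of finite
length, `N` a `ℤ`-graded `A`-module and `π : M ↠ N` a surjection of ungraded
modules.  Then there exist a `ℤ`-graded `A`-module `P` and a surjection of
ungraded modules `ρ : P ↠ M` such that the composite `π ∘ ρ : P → N` is a
morphism of graded modules (preserves the gradings). -/
theorem exists_graded_cover_of_surjection_onto_graded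
    {A : Type u} [Ring A] [IsArtinian A A]
    (𝒜 : ℤ → AddSubgroup A) [GradedRing 𝒜]
    {M N : Type u} [AddCommGroup M] [Module A M] [AddCommGroup N] [Module A N]
    (hM : IsFiniteLength A M)
    (𝒩 : ℤ → AddSubgroup N) [DirectSum.Decomposition 𝒩]
    (h𝒩 : ∀ ⦃i j : ℤ⦄ ⦃a : A⦄ ⦃n : N⦄, a ∈ 𝒜 i → n ∈ 𝒩 j → a • n ∈ 𝒩 (i + j))
    (π : M →ₗ[A] N) (hπ : Function.Surjective π) :
    ∃ (P : GradedModuleOver A 𝒜) (ρ : P.carrier →ₗ[A] M),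
      Function.Surjective ρ ∧
      ∀ (j : ℤ), ∀ x ∈ P.grading j, π (ρ x) ∈ 𝒩 j :=
  exists_graded_cover_of_surjection_onto_graded_general 𝒜 𝒩 h𝒩 π hπ
end
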